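/- arXiv:1204.2180 — 7 statements merged into one kernel-verified Lean document; each statement's English description precedes it below -/
import Mathlib

section
/- For every binary word S of length n, there exist two disjoint identical scattered subwords of S each of length at least ⌊n/3⌋. -/
/-- The scattered subword of `S` indexed by the set `I`, taken in increasing order. -/
def extract {α : Type*} (S : List α) (I : Finset ℕ) : List α :=
  (I.sort (· ≤ ·)).filterMap (fun i => S[i]?)

/-- `S` has two disjoint identical scattered subwords of length `ℓ`. -/
def HasTwins {α : Type*} (S : List α) (ℓ : ℕ) : Prop :=
  ∃ I J : Finset ℕ, I ⊆ Finset.range S.length ∧ J ⊆ Finset.range S.length ∧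
    Disjoint I J ∧ I.card = ℓ ∧ J.card = ℓ ∧ extract S I = extract S J

/-!
Cut the word into consecutive blocks of `q + 1` letters, `q` the size of the alphabet. By
pigeonhole every block has two equal letters, at offsets `i < j`. The first positions of all
blocks and the second positions of all blocks are two disjoint increasing index sequences that
read the same word, of length `⌊n / (q + 1)⌋`.
-/

theorem Fintype.exists_lt_map_eq_of_card_lt {α β : Type*} [LinearOrder α] [Fintype α]
    [Fintype β] (f : α → β) (h : Fintype.card β < Fintype.card α) :
    ∃ x y, x < y ∧ f x = f y := by
  obtain ⟨x, y, hne, hxy⟩ := Fintype.exists_ne_map_eq_of_card_lt f h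
  rcases hne.lt_or_gt with hlt | hlt
  · exact ⟨x, y, hlt, hxy⟩
  · exact ⟨y, x, hlt, hxy.symm⟩

theorem strictMono_mul_add_fin {r : ℕ} (a : ℕ → Fin r) : StrictMono fun k => r * k + a k :=
  strictMono_nat_of_lt_succ fun k => by
    have := (a k).isLt
    rw [Nat.mul_succ]
    omega

theorem eq_of_mul_add_fin_eq {r k l : ℕ} {i j : Fin r} (h : r * k + i = r * l + j) :
    k = l ∧ i = j := by
  have hdiv (k : ℕ) (i : Fin r) : (r * k + i) / r = k := by
    rw [add_comm, Nat.add_mul_div_left _ _ i.pos, Nat.div_eq_of_lt i.isLt, zero_add]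
  have hkl : k = l := by rw [← hdiv k i, h, hdiv]
  subst hkl
  exact ⟨rfl, Fin.ext (by omega)⟩

theorem mul_add_lt_of_lt_div {n r k i : ℕ} (hk : k < n / r) (hi : i < r) : r * k + i < n :=
  calc r * k + i < r * (k + 1) := by rw [Nat.mul_succ]; omega
    _ ≤ r * (n / r) := Nat.mul_le_mul_left r hk
    _ ≤ n := Nat.mul_div_le n r

theorem extract_map_range {α : Type*} (S : List α) {f : ℕ → ℕ} (hf : StrictMono f) (m : ℕ) :
    extract S ((Finset.range m).map ⟨f, hf.injective⟩) =
      (List.range m).filterMap fun k => S[f k]? := by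
  rw [extract, ← (hf.strictMonoOn _).map_finsetSort, Finset.sort_range, List.filterMap_map]
  rfl

theorem hasTwins_of_strictMono {α : Type*} {S : List α} {m : ℕ} {f g : ℕ → ℕ}
    (hf : StrictMono f) (hg : StrictMono g) (hfg : ∀ k l, f k ≠ g l)
    (hlen : ∀ k < m, f k < S.length ∧ g k < S.length) (heq : ∀ k < m, S[f k]? = S[g k]?) :
    HasTwins S m := by
  refine ⟨(Finset.range m).map ⟨f, hf.injective⟩, (Finset.range m).map ⟨g, hg.injective⟩,
    ?_, ?_, ?_, by simp, by simp, ?_⟩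
  · simpa [Finset.subset_iff] using fun k hk => (hlen k hk).1
  · simpa [Finset.subset_iff] using fun k hk => (hlen k hk).2
  · simpa [Finset.disjoint_left] using fun k _ l _ h => hfg k l h.symm
  · rw [extract_map_range S hf, extract_map_range S hg]
    exact List.filterMap_congr fun k hk => heq k (List.mem_range.mp hk)

theorem hasTwins_length_div_card_succ {α : Type*} [Fintype α] [Inhabited α] (S : List α) :
    HasTwins S (S.length / (Fintype.card α + 1)) := by
  set r := Fintype.card α + 1
  -- Reading through `getD` makes the choice of offsets total in `k`; it is only used inside `S`.
  have hblock (k : ℕ) :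
      ∃ i j : Fin r, i < j ∧ S.getD (r * k + i) default = S.getD (r * k + j) default :=
    Fintype.exists_lt_map_eq_of_card_lt _ (by simp [r])
  choose a b hab heq using hblock
  have hlen (k : ℕ) (hk : k < S.length / r) (i : Fin r) : r * k + i < S.length :=
    mul_add_lt_of_lt_div hk i.isLt
  refine hasTwins_of_strictMono (strictMono_mul_add_fin a) (strictMono_mul_add_fin b)
    (fun k l h => (hab k).ne ?_) (fun k hk => ⟨hlen k hk _, hlen k hk _⟩) fun k hk => ?_
  · obtain ⟨rfl, hi⟩ := eq_of_mul_add_fin_eq h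
    exact hi
  · simp only [List.getElem?_eq_getElem (hlen k hk _), ← List.getD_eq_getElem _ default, heq]

/-- Every binary word of length `n` has two disjoint identical scattered subwords
of length `⌊n/3⌋`. -/
theorem twins_third (n : ℕ) (S : List (Fin 2)) (hS : S.length = n) :
    HasTwins S (n / 3) := by
  subst hS
  simpa using hasTwins_length_div_card_succ S
end

section
/- Key algebraic identity for the increment lemma: for reals d, γ and positive integers m, b with b < m, it holds that (dm − (d−γ)b)²/((m−b)m) + (d−γ)² b/m = d² + γ² b/(m−b). Consequently, if |γ| ≥ ε and b = εm with 0 < ε < 1, the left-hand side is at least d² + ε³. -/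
/-- Key algebraic identity for the increment lemma, together with the resulting
lower bound `d² + ε³` when `|γ| ≥ ε` and `b = ε·m` with `0 < ε < 1`. -/
theorem increment_identity (d γ m b : ℝ) (hb : 0 < b) (hbm : b < m) :
    (d * m - (d - γ) * b) ^ 2 / ((m - b) * m) + (d - γ) ^ 2 * (b / m)
      = d ^ 2 + γ ^ 2 * (b / (m - b)) ∧
    ∀ ε : ℝ, 0 < ε → ε < 1 → ε ≤ |γ| → b = ε * m →
      d ^ 2 + ε ^ 3 ≤
        (d * m - (d - γ) * b) ^ 2 / ((m - b) * m) + (d - γ) ^ 2 * (b / m) := by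
  have hm : 0 < m := hb.trans hbm
  have hmb : 0 < m - b := by linarith
  have key : (d * m - (d - γ) * b) ^ 2 / ((m - b) * m) + (d - γ) ^ 2 * (b / m)
      = d ^ 2 + γ ^ 2 * (b / (m - b)) := by
    field_simp
    ring
  refine ⟨key, fun ε hε hε1 hεγ hbε => ?_⟩
  rw [key]
  have hγ2 : ε ^ 2 ≤ γ ^ 2 := by
    have := sq_abs γ
    nlinarith [abs_nonneg γ]
  have hfrac : ε ≤ b / (m - b) := by
    rw [hbε] at hmb ⊢
    rw [le_div_iff₀ hmb]
    nlinarith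
  have h1 : ε ^ 3 = ε ^ 2 * ε := by ring
  nlinarith [sq_nonneg γ, mul_pos hb (inv_pos.mpr hmb)]
end

section
/- Twins in ε-regular binary words: if S is an ε-regular binary word of length m (with 1/ε a positive integer dividing appropriately, 0 < ε ≤ 1/5), then S contains two disjoint identical scattered subwords whose total length is at least m − 5εm, i.e., 2f(S) ≥ (1 − 5ε)m. -/
/-- Density of the letter `q` in a word `T` (0 if `T` is empty). -/
noncomputable def density {α : Type*} [DecidableEq α] (q : α) (T : List α) : ℝ :=
  (T.count q : ℝ) / (T.length : ℝ)

/-- `S` is `ε`-regular (with `b = ε·|S|` a positive integer). -/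
def EpsRegular {α : Type*} [DecidableEq α] (S : List α) (ε : ℝ) (b : ℕ) : Prop :=
  ∀ q : α, ∀ i : ℕ, b ≤ i → i + 2 * b ≤ S.length →
    |density q S - density q ((S.drop i).take b)| < ε

/-!
Cut `S` into `t` blocks of length `b = εm`. Regularity says that every inner block
(`1 ≤ j ≤ t - 2`) contains more than `(|S|_q - b) / t` copies of each letter `q`.
Let `a₀, a₁, …` alternate between the majority and the minority letter of `S`, starting with the
majority one. For `k < t - 3` put `x_k` copies of `a_k` from block `k + 1` into `I` and `x_k`
copies of `a_k` from block `k + 2` into `J`, with `x_k` as large as both blocks allow. Block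
`k + 2` then serves `I` with the letter `a_{k+1}` and `J` with `a_k`, so `I` and `J` are
disjoint, and both spell `a₀^x₀ a₁^x₁ ⋯`. Summing the regularity bounds, and using that two
consecutive letters account for all of `S`, gives `2 ∑ x_k ≥ (t - 5) b`.
-/

open Finset

section Extract

variable {α : Type*}

lemma extract_eq_replicate (S : List α) (I : Finset ℕ) (q : α) (h : ∀ i ∈ I, S[i]? = some q) :
    extract S I = List.replicate #I q := by
  rw [extract, List.filterMap_congr (g := some ∘ fun _ => q) (fun i hi => h i (by simpa using hi)),
    List.filterMap_eq_map, List.map_const', length_sort]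

lemma Finset.sort_union_of_lt {I J : Finset ℕ} (h : ∀ i ∈ I, ∀ j ∈ J, i < j) :
    (I ∪ J).sort (· ≤ ·) = I.sort (· ≤ ·) ++ J.sort (· ≤ ·) := by
  refine List.Perm.eq_of_pairwise' (pairwise_sort _ _) ?_ ?_
  · rw [List.pairwise_append]
    exact ⟨pairwise_sort _ _, pairwise_sort _ _,
      fun i hi j hj => (h i (by simpa using hi) j (by simpa using hj)).le⟩
  · refine (List.perm_ext_iff_of_nodup (sort_nodup _ _) ?_).2 (by simp)
    exact List.nodup_append.2 ⟨sort_nodup _ _, sort_nodup _ _,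
      fun i hi j hj => (h i (by simpa using hi) j (by simpa using hj)).ne⟩

lemma extract_union_of_lt (S : List α) {I J : Finset ℕ} (h : ∀ i ∈ I, ∀ j ∈ J, i < j) :
    extract S (I ∪ J) = extract S I ++ extract S J := by
  rw [extract, sort_union_of_lt h, List.filterMap_append, extract, extract]

lemma extract_biUnion_range (S : List α) {P : ℕ → Finset ℕ}
    (hP : ∀ k₁ k₂, k₁ < k₂ → ∀ i ∈ P k₁, ∀ j ∈ P k₂, i < j) (n : ℕ) :
    extract S ((range n).biUnion P) = (List.range n).flatMap fun k => extract S (P k) := by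
  induction n with
  | zero => simp [extract]
  | succ n ih =>
    have hlt : ∀ i ∈ (range n).biUnion P, ∀ j ∈ P n, i < j := by
      simp only [mem_biUnion, mem_range]
      rintro i ⟨k, hk, hi⟩ j hj
      exact hP k n hk i hi j hj
    rw [range_add_one, biUnion_insert, union_comm, extract_union_of_lt S hlt, ih,
      List.range_succ, List.flatMap_append, List.flatMap_singleton]

end Extract

section BlockFamily

variable {P : ℕ → Finset ℕ} {b d : ℕ}

lemma lt_of_mem_of_div_eq_add (hP : ∀ k, ∀ i ∈ P k, i / b = k + d) {k₁ k₂ : ℕ} (hk : k₁ < k₂)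
    {i j : ℕ} (hi : i ∈ P k₁) (hj : j ∈ P k₂) : i < j :=
  Nat.lt_of_div_lt_div (by rw [hP k₁ i hi, hP k₂ j hj]; omega)

lemma pairwiseDisjoint_of_div_eq_add (hP : ∀ k, ∀ i ∈ P k, i / b = k + d) (s : Set ℕ) :
    s.PairwiseDisjoint P := fun k₁ _ k₂ _ hne =>
  disjoint_left.2 fun i h₁ h₂ => hne (by have := hP k₁ i h₁; have := hP k₂ i h₂; omega)

end BlockFamily

lemma card_filter_Ico_getElem?_eq_count {α : Type*} [DecidableEq α] (S : List α) (q : α)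
    (lo len : ℕ) : #{i ∈ Ico lo (lo + len) | S[i]? = some q} = ((S.drop lo).take len).count q := by
  induction len with
  | zero => simp
  | succ n ih =>
    rw [← add_assoc, Nat.Ico_succ_right_eq_insert_Ico (by omega), filter_insert,
      List.take_add_one, List.count_append, ← ih, List.getElem?_drop]
    cases h : S[lo + n]? with
    | none => simp
    | some v => by_cases hv : v = q <;> simp [hv]

section Blocks

variable {α : Type*} [DecidableEq α]

def blockPositions (S : List α) (b j : ℕ) (q : α) : Finset ℕ :=
  {i ∈ Ico (j * b) (j * b + b) | S[i]? = some q}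

def blockCount (S : List α) (b j : ℕ) (q : α) : ℕ :=
  ((S.drop (j * b)).take b).count q

def blockTwinLength (S : List α) (b n : ℕ) (a : ℕ → α) : ℕ :=
  ∑ k ∈ range n, min (blockCount S b (k + 1) (a k)) (blockCount S b (k + 2) (a k))

variable {S : List α} {b j i : ℕ} {q : α}

lemma card_blockPositions : #(blockPositions S b j q) = blockCount S b j q :=
  card_filter_Ico_getElem?_eq_count S q (j * b) b

lemma getElem?_of_mem_blockPositions (hi : i ∈ blockPositions S b j q) : S[i]? = some q :=
  (mem_filter.1 hi).2

lemma lt_length_of_mem_blockPositions (hi : i ∈ blockPositions S b j q) : i < S.length :=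
  (List.getElem?_eq_some_iff.1 (getElem?_of_mem_blockPositions hi)).1

lemma div_eq_of_mem_blockPositions (hi : i ∈ blockPositions S b j q) : i / b = j := by
  obtain ⟨hlo, hhi⟩ := mem_Ico.1 (mem_filter.1 hi).1
  exact Nat.div_eq_of_lt_le hlo (by rwa [add_one_mul])

lemma count_le_mul_blockCount_add {t : ℕ} (hb : 0 < b) (hS : S.length = t * b)
    (hreg : EpsRegular S (1 / t) b) (hj : 1 ≤ j) (hjt : j + 2 ≤ t) (q : α) :
    S.count q ≤ t * blockCount S b j q + b := by
  have hjb : j * b + 2 * b ≤ t * b := by nlinarith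
  have h := (abs_lt.1 (hreg q (j * b) (Nat.le_mul_of_pos_left b hj) (by omega))).2
  have hlen : ((S.drop (j * b)).take b).length = b := by
    simp only [List.length_take, List.length_drop, hS, inf_eq_left]; omega
  rw [density, density, hlen, hS, ← blockCount] at h
  have ht : (0 : ℝ) < t := by exact_mod_cast (show 0 < t by omega)
  have hbR : (0 : ℝ) < b := by exact_mod_cast hb
  push_cast at h
  rw [div_sub_div _ _ (by positivity) hbR.ne', div_lt_div_iff₀ (by positivity) ht] at h
  have key : ((S.count q : ℝ) - t * blockCount S b j q) * (t * b) < b * (t * b) := by linarith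
  have : (S.count q : ℝ) < t * blockCount S b j q + b := by
    linarith [lt_of_mul_lt_mul_right key (by positivity)]
  exact_mod_cast this.le

lemma sum_count_le_blockTwinLength {t n : ℕ} (hb : 0 < b) (hS : S.length = t * b)
    (hreg : EpsRegular S (1 / t) b) (hn : n + 3 ≤ t) (a : ℕ → α) :
    ∑ k ∈ range n, S.count (a k) ≤ t * blockTwinLength S b n a + n * b := by
  have hpair : ∀ k ∈ range n, S.count (a k) ≤
      t * min (blockCount S b (k + 1) (a k)) (blockCount S b (k + 2) (a k)) + b := by
    intro k hk
    have hk := mem_range.1 hk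
    rcases min_choice (blockCount S b (k + 1) (a k)) (blockCount S b (k + 2) (a k)) with h | h <;>
      rw [h] <;> exact count_le_mul_blockCount_add hb hS hreg (by omega) (by omega) _
  calc _ ≤ _ := sum_le_sum hpair
    _ = t * blockTwinLength S b n a + n * b := by
      rw [sum_add_distrib, ← mul_sum, sum_const, card_range, smul_eq_mul, blockTwinLength]

theorem hasTwins_blockTwinLength (S : List α) (b n : ℕ) (a : ℕ → α)
    (ha : ∀ k, a (k + 1) ≠ a k) :
    HasTwins S (blockTwinLength S b n a) := by
  choose P hPsub hPcard using fun k => exists_subset_card_eq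
    ((min_le_left _ _).trans (card_blockPositions (S := S) (b := b) (j := k + 1) (q := a k)).ge)
  choose Q hQsub hQcard using fun k => exists_subset_card_eq
    ((min_le_right _ _).trans (card_blockPositions (S := S) (b := b) (j := k + 2) (q := a k)).ge)
  have hPdiv : ∀ k, ∀ i ∈ P k, i / b = k + 1 :=
    fun k i hi => div_eq_of_mem_blockPositions (hPsub k hi)
  have hQdiv : ∀ k, ∀ i ∈ Q k, i / b = k + 2 :=
    fun k i hi => div_eq_of_mem_blockPositions (hQsub k hi)
  have hPQ : ∀ k, extract S (P k) = extract S (Q k) := fun k => by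
    rw [extract_eq_replicate S _ (a k) fun i hi => getElem?_of_mem_blockPositions (hPsub k hi),
      extract_eq_replicate S _ (a k) fun i hi => getElem?_of_mem_blockPositions (hQsub k hi),
      hPcard, hQcard]
  refine ⟨(range n).biUnion P, (range n).biUnion Q, ?_, ?_, ?_, ?_, ?_, ?_⟩
  · exact biUnion_subset.2 fun k _ i hi =>
      mem_range.2 (lt_length_of_mem_blockPositions (hPsub k hi))
  · exact biUnion_subset.2 fun k _ i hi =>
      mem_range.2 (lt_length_of_mem_blockPositions (hQsub k hi))
  · simp only [disjoint_left, mem_biUnion]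
    rintro i ⟨k, -, hiP⟩ ⟨k', -, hiQ⟩
    obtain rfl : k = k' + 1 := by have := hPdiv k i hiP; have := hQdiv k' i hiQ; omega
    refine ha k' (Option.some_injective _ ?_)
    rw [← getElem?_of_mem_blockPositions (hPsub _ hiP), getElem?_of_mem_blockPositions (hQsub _ hiQ)]
  · rw [card_biUnion (pairwiseDisjoint_of_div_eq_add hPdiv _)]
    exact sum_congr rfl fun k _ => hPcard k
  · rw [card_biUnion (pairwiseDisjoint_of_div_eq_add hQdiv _)]
    exact sum_congr rfl fun k _ => hQcard k
  · rw [extract_biUnion_range S fun _ _ hk _ hi _ hj => lt_of_mem_of_div_eq_add hPdiv hk hi hj,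
      extract_biUnion_range S fun _ _ hk _ hi _ hj => lt_of_mem_of_div_eq_add hQdiv hk hi hj]
    exact List.flatMap_congr fun k _ => hPQ k

end Blocks

lemma List.exists_count_le_count_add_count_eq_length (S : List (Fin 2)) :
    ∃ c c' : Fin 2, c ≠ c' ∧ S.count c' ≤ S.count c ∧ S.count c + S.count c' = S.length := by
  have h := Multiset.sum_count_eq_card (s := univ) (m := (S : Multiset (Fin 2))) fun _ _ => mem_univ _
  simp only [Fin.sum_univ_two, Multiset.coe_count, Multiset.coe_card] at h
  rcases le_total (S.count 0) (S.count 1) with h01 | h10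
  · exact ⟨1, 0, by decide, h01, by omega⟩
  · exact ⟨0, 1, by decide, h10, h⟩

lemma mul_add_le_two_mul_sum_ite_even {u v : ℕ} (h : v ≤ u) (n : ℕ) :
    n * (u + v) ≤ 2 * ∑ k ∈ range n, if Even k then u else v := by
  have hpair : ∀ k, ((if Even k then u else v) + if Even (k + 1) then u else v) = u + v := by
    intro k
    by_cases hk : Even k <;> simp [hk, Nat.even_add_one, add_comm]
  induction n using Nat.twoStepInduction with
  | zero => simp
  | one => simpa [two_mul]
  | more n ih _ =>
    rw [sum_range_succ, sum_range_succ, add_assoc, hpair]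
    linarith

/-- Twins in `ε`-regular binary words: an `ε`-regular binary word of length `m = t·b`
(where `ε = 1/t`, `t ≥ 5`) has two disjoint identical scattered subwords of total
length at least `(1 - 5ε)·m`. -/
theorem twins_in_regular (t b : ℕ) (ht : 5 ≤ t) (hb : 1 ≤ b) (ε : ℝ)
    (hε : ε = 1 / (t : ℝ)) (S : List (Fin 2)) (hS : S.length = t * b)
    (hreg : EpsRegular S ε b) :
    ∃ ℓ : ℕ, HasTwins S ℓ ∧ (1 - 5 * ε) * (S.length : ℝ) ≤ 2 * (ℓ : ℝ) := by
  subst hε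
  obtain ⟨c, c', hcc', hle, hsum⟩ := S.exists_count_le_count_add_count_eq_length
  set a : ℕ → Fin 2 := fun k => if Even k then c else c'
  have ha : ∀ k, a (k + 1) ≠ a k := fun k => by
    by_cases hk : Even k <;> simp [a, hk, Nat.even_add_one, hcc', hcc'.symm]
  obtain ⟨n, rfl⟩ : ∃ n, t = n + 3 := ⟨t - 3, by omega⟩
  refine ⟨_, hasTwins_blockTwinLength S b n a ha, ?_⟩
  have hcounts := sum_count_le_blockTwinLength hb hS hreg le_rfl a
  have halt : n * S.length ≤ 2 * ∑ k ∈ range n, S.count (a k) := by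
    simpa only [← hsum, a, apply_ite (S.count ·)] using mul_add_le_two_mul_sum_ite_even hle n
  have hR : (n : ℝ) * ((n + 3) * b) ≤ 2 * ((n + 3) * blockTwinLength S b n a + n * b) := by
    rw [hS] at halt
    exact_mod_cast halt.trans (Nat.mul_le_mul_left 2 hcounts)
  have hlhs : (1 - 5 * (1 / ((n + 3 : ℕ) : ℝ))) * (S.length : ℝ) = (n - 2) * b := by
    rw [hS]; push_cast; field_simp; ring
  rw [hlhs]
  nlinarith
end

section
/- Upper bound construction: for the binary word S = S_k S_{k−1} ⋯ S_0, where S_i is a block of 3^i identical letters, equal to 1 if i is even and 0 if i is odd, any two disjoint identical scattered subwords A, B of S satisfy |A| + |B| ≤ |S| − (k+1). In particular 2f(S) ≤ n − log₃(2n+1) + O(1), where n = (3^{k+1}−1)/2. -/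
/-- The word `S_k S_{k-1} ⋯ S_0`, where `S_i` is a block of `3^i` copies of the
letter `1` if `i` is even and of `0` if `i` is odd. -/
def blockWord : ℕ → List (Fin 2)
  | 0 => List.replicate 1 1
  | k + 1 =>
      List.replicate (3 ^ (k + 1)) (if (k + 1) % 2 = 0 then (1 : Fin 2) else 0)
        ++ blockWord k

def letterOf (m : ℕ) : Fin 2 := if m % 2 = 0 then 1 else 0

lemma blockWord_succ (k : ℕ) :
    blockWord (k+1) = List.replicate (3^(k+1)) (letterOf (k+1)) ++ blockWord k := rfl

lemma blockWord_zero : blockWord 0 = List.replicate 1 (letterOf 0) := rfl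

lemma letterOf_succ_ne (m : ℕ) : letterOf (m+1) ≠ letterOf m := by
  unfold letterOf
  rcases Nat.even_or_odd m with h | h
  · simp [Nat.even_iff.mp h, Nat.succ_mod_two_eq_one_iff.mpr (Nat.even_iff.mp h)]
  · simp [Nat.odd_iff.mp h, Nat.succ_mod_two_eq_zero_iff.mpr (Nat.odd_iff.mp h)]

lemma letterOf_two_add (m : ℕ) : letterOf (m+2) = letterOf m := by
  unfold letterOf
  simp [Nat.add_mod_right]

lemma two_mul_len (k : ℕ) : 2 * (blockWord k).length + 1 = 3^(k+1) := by
  induction k with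
  | zero => rfl
  | succ k ih =>
    rw [blockWord_succ, List.length_append, List.length_replicate]
    ring_nf
    ring_nf at ih
    omega

lemma filterMap_getElem?_sublist {α : Type*} :
    ∀ (S : List α) (l : List ℕ), l.Pairwise (· < ·) →
      (l.filterMap (fun i => S[i]?)).Sublist S := by
  intro S
  induction S with
  | nil => intro l _; simp
  | cons x S' ih =>
    intro l hl
    cases l with
    | nil => simp
    | cons i t =>
      obtain ⟨h1, h2⟩ := List.pairwise_cons.mp hl
      rcases Nat.eq_zero_or_pos i with hi | hi
      · subst hi
        have ht : t.filterMap (fun j => (x :: S')[j]?)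
            = (t.map (fun j => j - 1)).filterMap (fun j => S'[j]?) := by
          rw [List.filterMap_map]
          apply List.filterMap_congr
          intro j hj
          have : 1 ≤ j := h1 j hj
          simp only [Function.comp]
          rw [show j = (j-1)+1 by omega, List.getElem?_cons_succ]
          simp
        have hsort : (t.map (fun j => j - 1)).Pairwise (· < ·) := by
          rw [List.pairwise_map]
          refine h2.imp_of_mem ?_
          intro a b ha hb hab
          have := h1 a ha
          omega
        rw [List.filterMap_cons]
        simp only [List.getElem?_cons_zero]
        rw [ht]
        exact List.Sublist.cons₂ x (ih _ hsort)
      · have hall : ∀ j ∈ i :: t, 1 ≤ j := by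
          intro j hj
          rcases List.mem_cons.mp hj with rfl | hj
          · exact hi
          · exact le_trans (Nat.succ_le_of_lt hi) (le_of_lt (h1 j hj))
        have ht : (i :: t).filterMap (fun j => (x :: S')[j]?)
            = ((i :: t).map (fun j => j - 1)).filterMap (fun j => S'[j]?) := by
          rw [List.filterMap_map]
          apply List.filterMap_congr
          intro j hj
          have : 1 ≤ j := hall j hj
          simp only [Function.comp]
          rw [show j = (j-1)+1 by omega, List.getElem?_cons_succ]
          simp
        have hsort : ((i :: t).map (fun j => j - 1)).Pairwise (· < ·) := by
          rw [List.pairwise_map]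
          refine hl.imp_of_mem ?_
          intro a b ha hb hab
          have := hall a ha
          omega
        rw [ht]
        exact List.Sublist.cons x (ih _ hsort)

lemma extract_sublist {α : Type*} (S : List α) (I : Finset ℕ) :
    (extract S I).Sublist S :=
  filterMap_getElem?_sublist S _ (Finset.sortedLT_sort I).pairwise

lemma count_extract_le {α : Type*} [DecidableEq α] (S : List α) (I : Finset ℕ) (x : α) :
    (extract S I).count x ≤ S.count x :=
  (extract_sublist S I).count_le x

lemma length_filterMap_getElem {α : Type*} (S : List α) :
    ∀ (l : List ℕ), (∀ i ∈ l, i < S.length) →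
      (l.filterMap (fun i => S[i]?)).length = l.length := by
  intro l
  induction l with
  | nil => simp
  | cons i t ih =>
    intro h
    rw [List.filterMap_cons]
    have hi : i < S.length := h i List.mem_cons_self
    rw [List.getElem?_eq_getElem hi]
    simp only [List.length_cons]
    rw [ih (fun j hj => h j (List.mem_cons_of_mem _ hj))]

lemma length_extract {α : Type*} (S : List α) (I : Finset ℕ)
    (h : I ⊆ Finset.range S.length) :
    (extract S I).length = I.card := by
  unfold extract
  rw [length_filterMap_getElem, Finset.length_sort]
  intro i hi
  exact Finset.mem_range.mp (h (Finset.mem_sort (α := ℕ) (· ≤ ·) |>.mp hi))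

lemma sort_filter_append (I : Finset ℕ) (N : ℕ) :
    I.sort (· ≤ ·) = (I.filter (fun i => i < N)).sort (· ≤ ·)
      ++ (I.filter (fun i => ¬ i < N)).sort (· ≤ ·) := by
  refine (fun hp hs => (List.Perm.eq_of_pairwise' hs (Finset.pairwise_sort _ _) hp).symm) ?_ ?_
  · refine Multiset.coe_eq_coe.mp ?_
    rw [← Multiset.coe_add]
    rw [Finset.sort_eq, Finset.sort_eq, Finset.sort_eq, Finset.filter_val, Finset.filter_val]
    exact Multiset.filter_add_not _ _
  · rw [List.pairwise_append]
    refine ⟨Finset.pairwise_sort _ _, Finset.pairwise_sort _ _, ?_⟩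
    intro a ha b hb
    have ha' := (Finset.mem_filter.mp ((Finset.mem_sort (α := ℕ) (· ≤ ·)).mp ha)).2
    have hb' := (Finset.mem_filter.mp ((Finset.mem_sort (α := ℕ) (· ≤ ·)).mp hb)).2
    omega

lemma sort_image_sub (K : Finset ℕ) (N : ℕ) (h : ∀ i ∈ K, N ≤ i) :
    (K.image (fun i => i - N)).sort (· ≤ ·) = (K.sort (· ≤ ·)).map (fun i => i - N) := by
  refine (fun hp hs => List.Perm.eq_of_pairwise' (Finset.pairwise_sort _ _) hs hp) ?_ ?_
  · refine Multiset.coe_eq_coe.mp ?_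
    rw [← Multiset.map_coe, Finset.sort_eq, Finset.sort_eq, Finset.image_val]
    refine Multiset.dedup_eq_self.mpr ?_
    refine Multiset.Nodup.map_on ?_ K.nodup
    intro a ha b hb hab
    have := h a ha; have := h b hb
    omega
  · rw [List.pairwise_map]
    refine (Finset.pairwise_sort _ _).imp ?_
    intro a b hab
    omega

lemma extract_rep_append {α : Type*} (x : α) (N : ℕ) (T : List α) (I : Finset ℕ) :
    extract (List.replicate N x ++ T) I
      = List.replicate ((I.filter (fun i => i < N)).card) x
        ++ extract T ((I.filter (fun i => ¬ i < N)).image (fun i => i - N)) := by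
  unfold extract
  rw [sort_filter_append I N, List.filterMap_append]
  congr 1
  · have h1 : ∀ i ∈ (I.filter (fun i => i < N)).sort (· ≤ ·),
        (List.replicate N x ++ T)[i]? = some x := by
      intro i hi
      have : i < N := (Finset.mem_filter.mp ((Finset.mem_sort (α := ℕ) (· ≤ ·)).mp hi)).2
      rw [List.getElem?_append]
      simp [List.getElem?_replicate, this]
    rw [List.filterMap_congr (fun i hi => h1 i hi)]
    have : ∀ (l : List ℕ), l.filterMap (fun _ => some x) = List.replicate l.length x := by
      intro l
      induction l with
      | nil => rfl
      | cons a t ih => simp [List.filterMap_cons, ih, List.replicate_succ]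
    rw [this, Finset.length_sort]
  · rw [sort_image_sub _ N (by intro i hi; have := (Finset.mem_filter.mp hi).2; omega)]
    rw [List.filterMap_map]
    apply List.filterMap_congr
    intro i hi
    have hiN : N ≤ i := by
      have := (Finset.mem_filter.mp ((Finset.mem_sort (α := ℕ) (· ≤ ·)).mp hi)).2
      omega
    simp only [Function.comp]
    rw [List.getElem?_append]
    simp [Nat.not_lt.mpr hiN]

def lowC (I : Finset ℕ) (N : ℕ) : ℕ := (I.filter (fun i => i < N)).card

def shiftF (I : Finset ℕ) (N : ℕ) : Finset ℕ :=
  (I.filter (fun i => ¬ i < N)).image (fun i => i - N)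

lemma extract_split {α : Type*} (x : α) (N : ℕ) (T : List α) (I : Finset ℕ) :
    extract (List.replicate N x ++ T) I
      = List.replicate (lowC I N) x ++ extract T (shiftF I N) :=
  extract_rep_append x N T I

lemma card_shiftF (I : Finset ℕ) (N : ℕ) :
    (shiftF I N).card + lowC I N = I.card := by
  unfold shiftF lowC
  rw [Finset.card_image_of_injOn]
  · rw [Nat.add_comm]
    exact Finset.card_filter_add_card_filter_not _
  · intro a ha b hb hab
    have := (Finset.mem_filter.mp ha).2
    have := (Finset.mem_filter.mp hb).2
    simp only at hab
    omega

lemma shiftF_subset_range (I : Finset ℕ) (N L : ℕ)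
    (h : I ⊆ Finset.range (N + L)) : shiftF I N ⊆ Finset.range L := by
  intro x hx
  obtain ⟨i, hi, rfl⟩ := Finset.mem_image.mp hx
  have h1 := (Finset.mem_filter.mp hi).2
  have h2 := Finset.mem_range.mp (h (Finset.mem_filter.mp hi).1)
  simp only [Finset.mem_range]
  omega

lemma disjoint_shiftF (I J : Finset ℕ) (N : ℕ) (h : Disjoint I J) :
    Disjoint (shiftF I N) (shiftF J N) := by
  rw [Finset.disjoint_left]
  intro x hxI hxJ
  obtain ⟨i, hi, hix⟩ := Finset.mem_image.mp hxI
  obtain ⟨j, hj, hjx⟩ := Finset.mem_image.mp hxJ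
  have h1 := (Finset.mem_filter.mp hi).2
  have h2 := (Finset.mem_filter.mp hj).2
  have hij : i = j := by omega
  subst hij
  exact (Finset.disjoint_left.mp h (Finset.mem_filter.mp hi).1)
    (Finset.mem_filter.mp hj).1

lemma lowC_add_lowC_le (I J : Finset ℕ) (N : ℕ) (h : Disjoint I J) :
    lowC I N + lowC J N ≤ N := by
  unfold lowC
  rw [← Finset.card_union_of_disjoint
    (h.mono (Finset.filter_subset _ _) (Finset.filter_subset _ _))]
  calc ((I.filter (fun i => i < N)) ∪ (J.filter (fun i => i < N))).card
      ≤ (Finset.range N).card := by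
        apply Finset.card_le_card
        intro x hx
        rcases Finset.mem_union.mp hx with hx | hx <;>
          exact Finset.mem_range.mpr (Finset.mem_filter.mp hx).2
    _ = N := Finset.card_range N

def minCount (m : ℕ) : ℕ := (blockWord m).count (letterOf (m+1))

lemma count_fin2 (l : List (Fin 2)) (a b : Fin 2) (h : a ≠ b) :
    l.count a + l.count b = l.length := by
  induction l with
  | nil => rfl
  | cons x t ih =>
    have hx : x = a ∨ x = b := by fin_cases x <;> fin_cases a <;> fin_cases b <;> simp_all
    rcases hx with rfl | rfl <;>
      simp [List.count_cons, h, Ne.symm h, ← ih] <;> omega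

lemma minCount_zero : minCount 0 = 0 := by decide

lemma minCount_le_len (m : ℕ) : minCount m ≤ (blockWord m).length :=
  List.count_le_length

lemma minCount_succ (m : ℕ) :
    minCount (m+1) + minCount m = (blockWord m).length := by
  unfold minCount
  rw [blockWord_succ, List.count_append, List.count_replicate]
  rw [if_neg (by simpa using (letterOf_succ_ne (m+1)).symm)]
  rw [Nat.zero_add]
  have h2 : letterOf (m+1+1) = letterOf m := letterOf_two_add m
  rw [h2]
  exact count_fin2 _ _ _ (Ne.symm (letterOf_succ_ne m))

lemma arithG (m : ℕ) : (blockWord m).length + 2 * minCount m + 2 ≤ 3^(m+1) := by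
  induction m with
  | zero => decide
  | succ m ih =>
    have h1 := two_mul_len m
    have h2 := two_mul_len (m+1)
    have h3 := minCount_succ m
    have h4 := minCount_le_len m
    have hlen : (blockWord (m+1)).length = 3^(m+1) + (blockWord m).length := by
      rw [blockWord_succ, List.length_append, List.length_replicate]
    have h5 : (3:ℕ)^(m+2) = 3 * 3^(m+1) := by ring
    omega

lemma W1 {α : Type*} {A B₂ : List α} {b : ℕ} {c : α}
    (h : A <:+ List.replicate b c ++ B₂) (hl : A.length ≤ B₂.length) : A <:+ B₂ := by
  obtain ⟨P, hP⟩ := h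
  have hlen : P.length + A.length = b + B₂.length := by
    have := congrArg List.length hP
    simpa using this
  have hA : A = List.drop P.length (List.replicate b c ++ B₂) := by
    rw [← hP, List.drop_left]
  rw [List.drop_append] at hA
  rw [List.drop_eq_nil_of_le (by simp; omega), List.nil_append] at hA
  rw [hA]
  exact List.drop_suffix _ _

lemma W2 {α : Type*} {A B₂ : List α} {b : ℕ} {c : α}
    (h : A <:+ List.replicate b c ++ B₂) (hl : B₂.length ≤ A.length) :
    A = List.replicate (A.length - B₂.length) c ++ B₂ := by
  obtain ⟨P, hP⟩ := h
  have hlen : P.length + A.length = b + B₂.length := by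
    have := congrArg List.length hP
    simpa using this
  have hA : A = List.drop P.length (List.replicate b c ++ B₂) := by
    rw [← hP, List.drop_left]
  rw [List.drop_append] at hA
  rw [List.drop_replicate, List.length_replicate,
    Nat.sub_eq_zero_of_le (by omega : P.length ≤ b), List.drop_zero] at hA
  have heq : A.length - B₂.length = b - P.length := by omega
  rw [heq]
  exact hA

lemma W3 {α : Type*} {X Y : List α} {a s : ℕ} {c : α}
    (h : List.replicate a c ++ X = List.replicate s c ++ Y) (hs : s ≤ a) :
    Y = List.replicate (a - s) c ++ X := by
  have : List.replicate a c = List.replicate s c ++ List.replicate (a - s) c := by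
    rw [← List.replicate_add]
    congr 1
    omega
  rw [this, List.append_assoc] at h
  exact (List.append_cancel_left h).symm

lemma W4 {α : Type*} {X Y : List α} {t v : ℕ} {x y : α}
    (h : List.replicate t x ++ X = List.replicate v y ++ Y)
    (ht : 0 < t) (hv : 0 < v) : x = y := by
  obtain ⟨t', rfl⟩ : ∃ t', t = t'+1 := ⟨t-1, by omega⟩
  obtain ⟨v', rfl⟩ : ∃ v', v = v'+1 := ⟨v-1, by omega⟩
  simp [List.replicate_succ] at h
  exact h.1

lemma len_succ (m : ℕ) :
    (blockWord (m+1)).length = 3^(m+1) + (blockWord m).length := by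
  rw [blockWord_succ, List.length_append, List.length_replicate]

lemma key : ∀ m : ℕ, ∀ I J : Finset ℕ,
    I ⊆ Finset.range (blockWord m).length →
    J ⊆ Finset.range (blockWord m).length →
    Disjoint I J →
    extract (blockWord m) I <:+ extract (blockWord m) J →
    2 * I.card + (m+1) ≤ (blockWord m).length := by
  intro m
  induction m using Nat.strong_induction_on with
  | _ m IH =>
  intro I J hI hJ hdisj hsuf
  have hlenI := length_extract (blockWord m) I hI
  have hlenJ := length_extract (blockWord m) J hJ
  match m with
  | 0 =>
    have h1 : I.card ≤ J.card := by
      have := hsuf.length_le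
      omega
    have h2 : I.card + J.card ≤ 1 := by
      rw [← Finset.card_union_of_disjoint hdisj]
      calc (I ∪ J).card ≤ (Finset.range (blockWord 0).length).card := by
            apply Finset.card_le_card
            intro x hx
            rcases Finset.mem_union.mp hx with hx | hx
            · exact hI hx
            · exact hJ hx
        _ = 1 := by rfl
    have h3 : (blockWord 0).length = 1 := rfl
    omega
  | M + 1 =>
    set N := 3^(M+1) with hN
    set c := letterOf (M+1) with hc
    set S' := blockWord M with hS'
    have hw : blockWord (M+1) = List.replicate N c ++ S' := blockWord_succ M
    have hlen : (blockWord (M+1)).length = N + S'.length := len_succ M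
    have hSl : S'.length = (blockWord M).length := by rw [hS']
    set a := lowC I N with ha
    set b := lowC J N with hb
    set I₂ := shiftF I N with hI₂
    set J₂ := shiftF J N with hJ₂
    have hAeq : extract (blockWord (M+1)) I
        = List.replicate a c ++ extract S' I₂ := by rw [hw]; exact extract_split c N S' I
    have hBeq : extract (blockWord (M+1)) J
        = List.replicate b c ++ extract S' J₂ := by rw [hw]; exact extract_split c N S' J
    set A₂ := extract S' I₂ with hA₂
    set B₂ := extract S' J₂ with hB₂
    have hI₂r : I₂ ⊆ Finset.range S'.length :=
      shiftF_subset_range I N S'.length (by rw [← hlen]; exact hI)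
    have hJ₂r : J₂ ⊆ Finset.range S'.length :=
      shiftF_subset_range J N S'.length (by rw [← hlen]; exact hJ)
    have hdisj₂ : Disjoint I₂ J₂ := disjoint_shiftF I J N hdisj
    have hcardI : I₂.card + a = I.card := card_shiftF I N
    have hcardJ : J₂.card + b = J.card := card_shiftF J N
    have hlenA₂ : A₂.length = I₂.card := length_extract S' I₂ hI₂r
    have hlenB₂ : B₂.length = J₂.card := length_extract S' J₂ hJ₂r
    have hab : a + b ≤ N := lowC_add_lowC_le I J N hdisj
    have hoddN : N % 2 = 1 := by
      rw [hN, Nat.pow_mod]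
      norm_num
    have hGM := arithG M
    have h2l := two_mul_len M
    rw [hAeq, hBeq] at hsuf
    by_cases hcase : (List.replicate a c ++ A₂).length ≤ B₂.length
    · -- Case 1: A fits inside B₂
      have hAsufB₂ : List.replicate a c ++ A₂ <:+ B₂ := W1 hsuf hcase
      have hA₂suf : A₂ <:+ B₂ := (List.suffix_append (List.replicate a c) A₂).trans hAsufB₂
      have hIH := IH M (Nat.lt_succ_self M) I₂ J₂ (hSl ▸ hI₂r) (hSl ▸ hJ₂r) hdisj₂ hA₂suf
      have hac : a ≤ minCount M := by
        calc a ≤ (List.replicate a c ++ A₂).count c := by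
              simp [List.count_append, List.count_replicate]
          _ ≤ B₂.count c := hAsufB₂.sublist.count_le c
          _ ≤ S'.count c := count_extract_le S' J₂ c
          _ = minCount M := by rw [hS', hc]; rfl
      omega
    · -- Case 2: A sticks out of B₂
      push_neg at hcase
      have hcase' : B₂.length < a + A₂.length := by simpa using hcase
      have hAB : (List.replicate a c ++ A₂).length ≤ (List.replicate b c ++ B₂).length :=
        hsuf.length_le
      have hAB' : a + A₂.length ≤ b + B₂.length := by simpa using hAB
      have hA : List.replicate a c ++ A₂
          = List.replicate ((List.replicate a c ++ A₂).length - B₂.length) c ++ B₂ :=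
        W2 hsuf (le_of_lt hcase)
      set s := (List.replicate a c ++ A₂).length - B₂.length with hs
      have hslen : s + B₂.length = a + A₂.length := by
        rw [hs]
        simp only [List.length_append, List.length_replicate]
        omega
      have hsb : s ≤ b := by omega
      by_cases hsa : s ≤ a
      · -- B₂ = rep t c ++ A₂
        have hB₂A₂ : B₂ = List.replicate (a - s) c ++ A₂ := W3 hA hsa
        set t := a - s with hts
        rcases Nat.eq_zero_or_pos t with ht0 | ht1
        · -- t = 0 : B₂ = A₂
          rw [ht0] at hB₂A₂
          simp only [List.replicate_zero, List.nil_append] at hB₂A₂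
          have hx : A₂ <:+ B₂ := by rw [hB₂A₂]
          have hIH := IH M (Nat.lt_succ_self M) I₂ J₂ (hSl ▸ hI₂r) (hSl ▸ hJ₂r) hdisj₂ hx
          omega
        · -- t ≥ 1 : deep descent
          have htc : t ≤ minCount M := by
            calc t ≤ B₂.count c := by
                  rw [hB₂A₂]; simp [List.count_append, List.count_replicate]
              _ ≤ S'.count c := count_extract_le S' J₂ c
              _ = minCount M := by rw [hS', hc]; rfl
          match M, IH, hGM, h2l, hS', hSl, hI₂r, hJ₂r, hlenA₂, hlenB₂, hA₂, hB₂, htc, hB₂A₂, hc with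
          | 0, IH, hGM, h2l, hS', hSl, hI₂r, hJ₂r, hlenA₂, hlenB₂, hA₂, hB₂, htc, hB₂A₂, hc =>
            rw [minCount_zero] at htc; omega
          | M' + 1, IH, hGM, h2l, hS', hSl, hI₂r, hJ₂r, hlenA₂, hlenB₂, hA₂, hB₂, htc, hB₂A₂, hc =>
            set N' := 3^(M'+1) with hN'
            set c' := letterOf (M'+1) with hc'
            set S'' := blockWord M' with hS''
            have hw' : S' = List.replicate N' c' ++ S'' := by
              rw [hS', hN', hc', hS'']; exact blockWord_succ M'
            have hlen' : S'.length = N' + S''.length := by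
              rw [hS', hN', hS'']; exact len_succ M'
            have hS''l : S''.length = (blockWord M').length := by rw [hS'']
            have hcc' : c ≠ c' := by
              rw [hc, hc']; exact letterOf_succ_ne (M'+1)
            set a' := lowC I₂ N' with ha'
            set b' := lowC J₂ N' with hb'
            set I₃ := shiftF I₂ N' with hI₃
            set J₃ := shiftF J₂ N' with hJ₃
            have hA₂eq : A₂ = List.replicate a' c' ++ extract S'' I₃ := by
              rw [hA₂, hw']; exact extract_split c' N' S'' I₂
            have hB₂eq : B₂ = List.replicate b' c' ++ extract S'' J₃ := by
              rw [hB₂, hw']; exact extract_split c' N' S'' J₂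
            have hb'0 : b' = 0 := by
              by_contra hb'1
              exact hcc' (W4 (hB₂eq.symm.trans hB₂A₂) (Nat.pos_of_ne_zero hb'1) ht1).symm
            have hB₂' : B₂ = extract S'' J₃ := by
              rw [hB₂eq, hb'0]; simp
            have hI₃r : I₃ ⊆ Finset.range S''.length :=
              shiftF_subset_range I₂ N' S''.length (by rw [← hlen']; exact hI₂r)
            have hJ₃r : J₃ ⊆ Finset.range S''.length :=
              shiftF_subset_range J₂ N' S''.length (by rw [← hlen']; exact hJ₂r)
            have hdisj₃ : Disjoint I₃ J₃ := disjoint_shiftF I₂ J₂ N' hdisj₂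
            have hcardI₂ : I₃.card + a' = I₂.card := card_shiftF I₂ N'
            have hcardJ₂ : J₃.card + b' = J₂.card := card_shiftF J₂ N'
            have hlenA₃ : (extract S'' I₃).length = I₃.card := length_extract S'' I₃ hI₃r
            have hA₃suf : extract S'' I₃ <:+ B₂ := by
              rw [hB₂A₂, hA₂eq, ← List.append_assoc]
              exact List.suffix_append _ _
            have hIH := IH M' (by omega) I₃ J₃ (hS''l ▸ hI₃r) (hS''l ▸ hJ₃r) hdisj₃
              (by rw [← hS'']; rw [hB₂'] at hA₃suf; exact hA₃suf)
            have ha'c : a' ≤ minCount M' := by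
              calc a' ≤ A₂.count c' := by
                    rw [hA₂eq]; simp [List.count_append, List.count_replicate]
                _ ≤ B₂.count c' := by
                    rw [hB₂A₂]
                    exact (List.suffix_append _ _).sublist.count_le c'
                _ ≤ S''.count c' := by rw [hB₂']; exact count_extract_le S'' J₃ c'
                _ = minCount M' := by rw [hS'', hc']; rfl
            have htJ₃ : t ≤ J₃.card := by
              have hblen : B₂.length = t + A₂.length := by rw [hB₂A₂]; simp
              have hblen2 : B₂.length = J₂.card := hlenB₂
              omega
            have hJ₃len : J₃.card ≤ S''.length := by
              have := Finset.card_le_card hJ₃r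
              rwa [Finset.card_range] at this
            have hGM' := arithG M'
            have hgoal : (blockWord (M'+1+1)).length = N + N' + S''.length := by
              rw [hlen, hlen']; omega
            omega
      · -- a < s : A₂ = rep u c ++ B₂
        push_neg at hsa
        have hA₂B₂ : A₂ = List.replicate (s - a) c ++ B₂ := W3 hA.symm (le_of_lt hsa)
        set u := s - a with hu
        have hu1 : 0 < u := by omega
        have huc : u ≤ minCount M := by
          calc u ≤ A₂.count c := by
                rw [hA₂B₂]; simp [List.count_append, List.count_replicate]
            _ ≤ S'.count c := count_extract_le S' I₂ c
            _ = minCount M := by rw [hS', hc]; rfl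
        match M, IH, hGM, h2l, hS', hSl, hI₂r, hJ₂r, hlenA₂, hlenB₂, hA₂, hB₂, huc, hA₂B₂, hc with
        | 0, IH, hGM, h2l, hS', hSl, hI₂r, hJ₂r, hlenA₂, hlenB₂, hA₂, hB₂, huc, hA₂B₂, hc =>
          rw [minCount_zero] at huc; omega
        | M' + 1, IH, hGM, h2l, hS', hSl, hI₂r, hJ₂r, hlenA₂, hlenB₂, hA₂, hB₂, huc, hA₂B₂, hc =>
          set N' := 3^(M'+1) with hN'
          set c' := letterOf (M'+1) with hc'
          set S'' := blockWord M' with hS''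
          have hw' : S' = List.replicate N' c' ++ S'' := by
            rw [hS', hN', hc', hS'']; exact blockWord_succ M'
          have hlen' : S'.length = N' + S''.length := by
            rw [hS', hN', hS'']; exact len_succ M'
          have hS''l : S''.length = (blockWord M').length := by rw [hS'']
          have hcc' : c ≠ c' := by
            rw [hc, hc']; exact letterOf_succ_ne (M'+1)
          set a' := lowC I₂ N' with ha'
          set b' := lowC J₂ N' with hb'
          set I₃ := shiftF I₂ N' with hI₃
          set J₃ := shiftF J₂ N' with hJ₃
          have hA₂eq : A₂ = List.replicate a' c' ++ extract S'' I₃ := by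
            rw [hA₂, hw']; exact extract_split c' N' S'' I₂
          have hB₂eq : B₂ = List.replicate b' c' ++ extract S'' J₃ := by
            rw [hB₂, hw']; exact extract_split c' N' S'' J₂
          have ha'0 : a' = 0 := by
            by_contra ha'1
            exact hcc' (W4 (hA₂eq.symm.trans hA₂B₂) (Nat.pos_of_ne_zero ha'1) hu1).symm
          have hA₂' : A₂ = extract S'' I₃ := by
            rw [hA₂eq, ha'0]; simp
          have hI₃r : I₃ ⊆ Finset.range S''.length :=
            shiftF_subset_range I₂ N' S''.length (by rw [← hlen']; exact hI₂r)
          have hJ₃r : J₃ ⊆ Finset.range S''.length :=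
            shiftF_subset_range J₂ N' S''.length (by rw [← hlen']; exact hJ₂r)
          have hdisj₃ : Disjoint J₃ I₃ := (disjoint_shiftF I₂ J₂ N' hdisj₂).symm
          have hcardI₂ : I₃.card + a' = I₂.card := card_shiftF I₂ N'
          have hcardJ₂ : J₃.card + b' = J₂.card := card_shiftF J₂ N'
          have hlenB₃ : (extract S'' J₃).length = J₃.card := length_extract S'' J₃ hJ₃r
          have hB₃suf : extract S'' J₃ <:+ A₂ := by
            rw [hA₂B₂, hB₂eq, ← List.append_assoc]
            exact List.suffix_append _ _
          have hIH := IH M' (by omega) J₃ I₃ (hS''l ▸ hJ₃r) (hS''l ▸ hI₃r) hdisj₃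
            (by rw [← hS'']; rw [hA₂'] at hB₃suf; exact hB₃suf)
          have hb'c : b' ≤ minCount M' := by
            calc b' ≤ B₂.count c' := by
                  rw [hB₂eq]; simp [List.count_append, List.count_replicate]
              _ ≤ A₂.count c' := by
                  rw [hA₂B₂]
                  exact (List.suffix_append _ _).sublist.count_le c'
              _ ≤ S''.count c' := by rw [hA₂']; exact count_extract_le S'' I₃ c'
              _ = minCount M' := by rw [hS'', hc']; rfl
          have huI₃ : u + b' + J₃.card = I₃.card := by
            have h1 : A₂.length = u + B₂.length := by rw [hA₂B₂]; simp
            have h2 : B₂.length = b' + J₃.card := by rw [hB₂eq]; simp [hlenB₃]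
            have h3 : A₂.length = (extract S'' I₃).length := by rw [hA₂']
            have h4 : (extract S'' I₃).length = I₃.card := length_extract S'' I₃ hI₃r
            omega
          have hI₃len : I₃.card ≤ S''.length := by
            have := Finset.card_le_card hI₃r
            rwa [Finset.card_range] at this
          have hGM' := arithG M'
          have hgoal : (blockWord (M'+1+1)).length = N + N' + S''.length := by
            rw [hlen, hlen']; omega
          omega

/-- Upper bound construction: any two disjoint identical scattered subwords of
`blockWord k` have total length at most `|S| - (k+1)`. -/
theorem blockWord_twins_upper (k : ℕ) (I J : Finset ℕ)
    (hI : I ⊆ Finset.range (blockWord k).length)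
    (hJ : J ⊆ Finset.range (blockWord k).length)
    (hdisj : Disjoint I J)
    (heq : extract (blockWord k) I = extract (blockWord k) J) :
    I.card + J.card ≤ (blockWord k).length - (k + 1) := by
  have h1 : 2 * I.card + (k+1) ≤ (blockWord k).length :=
    key k I J hI hJ hdisj (heq ▸ List.suffix_refl _)
  have h2 : 2 * J.card + (k+1) ≤ (blockWord k).length :=
    key k J I hJ hI hdisj.symm (heq ▸ List.suffix_refl _)
  omega
end

section
/- Probabilistic upper bound on k-tuplets: let ℓ = |Σ| > k ≥ 2, and suppose α ∈ (0, 1/k) satisfies ℓ^{−(k−1)α} · α^{−kα} · (1 − kα)^{kα − 1} < 1. Then for all sufficiently large n there exists a word S of length n over Σ such that S does not contain k pairwise disjoint identical scattered subwords each of length ⌈αn⌉; i.e., f(n, k, Σ) < αn. -/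
/-- `S` has `k` pairwise disjoint identical scattered subwords of length `ℓ` each. -/
def HasKTuplets {α : Type*} (S : List α) (k ℓ : ℕ) : Prop :=
  ∃ I : Fin k → Finset ℕ, (∀ j, I j ⊆ Finset.range S.length) ∧
    (∀ j j', j ≠ j' → Disjoint (I j) (I j')) ∧ (∀ j, (I j).card = ℓ) ∧
    (∀ j j', extract S (I j) = extract S (I j'))

/-! A fixed `k`-tuple of pairwise disjoint `m`-sets of positions carries `k` identical subwords
of a uniformly random word with probability `ℓ ^ (-(k - 1) * m)`: the letters outside all but one
of the sets determine the word. There are at most `n! / ((m!)^k (n - k m)!)` such tuples, a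
multinomial coefficient, hence at most `n^n / (m^(k m) (n - k m)^(n - k m))`. So the expected
number of `k`-tuplets is at most `tupletRate ℓ k (m / n) ^ n`; for `m = ⌈α n⌉` we have `m / n → α`,
and `tupletRate ℓ k α < 1` makes this expectation eventually smaller than `1`. -/

open Finset Function

theorem Nat.choose_mul_pow_mul_pow_le (N m : ℕ) :
    N.choose m * m ^ m * (N - m) ^ (N - m) ≤ N ^ N := by
  rcases le_or_gt m N with hmN | hNm
  · calc N.choose m * m ^ m * (N - m) ^ (N - m)
        = m ^ m * (N - m) ^ (N - m) * N.choose m := by ring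
      _ ≤ ∑ i ∈ range (N + 1), m ^ i * (N - m) ^ (N - i) * N.choose i :=
        single_le_sum (f := fun i => m ^ i * (N - m) ^ (N - i) * N.choose i)
          (fun _ _ => Nat.zero_le _) (mem_range.mpr (Nat.lt_succ_of_le hmN))
      _ = (m + (N - m)) ^ N := by rw [add_pow]; simp
      _ = N ^ N := by rw [Nat.add_sub_cancel' hmN]
  · simp [Nat.choose_eq_zero_of_lt hNm]

section DisjointTuples

variable {ι : Type*}

open scoped Classical in
noncomputable def disjointTuples (m k : ℕ) (T : Finset ι) : Finset (Fin k → Finset ι) :=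
  {I ∈ Fintype.piFinset fun _ => T.powersetCard m | Pairwise (Disjoint on I)}

variable {m k : ℕ} {T : Finset ι}

theorem mem_disjointTuples {I : Fin k → Finset ι} :
    I ∈ disjointTuples m k T ↔ (∀ j, I j ⊆ T ∧ #(I j) = m) ∧ Pairwise (Disjoint on I) := by
  simp [disjointTuples, mem_powersetCard]

theorem card_disjointTuples_succ_le [DecidableEq ι] :
    #(disjointTuples m (k + 1) T) ≤ ∑ A ∈ T.powersetCard m, #(disjointTuples m k (T \ A)) := by
  rw [← card_sigma]
  refine card_le_card_of_injOn (fun I => ⟨I 0, Fin.tail I⟩) (fun I hI => ?_) ?_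
  · obtain ⟨hsub, hdisj⟩ := mem_disjointTuples.mp hI
    simp only [coe_sigma, Set.mem_sigma_iff, mem_coe, mem_powersetCard, mem_disjointTuples]
    refine ⟨hsub 0, fun j => ⟨subset_sdiff.mpr ⟨(hsub _).1, hdisj (Fin.succ_ne_zero j)⟩,
      (hsub _).2⟩, fun j j' h => hdisj (Fin.succ_injective _ |>.ne h)⟩
  · intro I _ J _ h
    simp only [Sigma.mk.injEq] at h
    rw [← Fin.cons_self_tail I, ← Fin.cons_self_tail J, h.1, eq_of_heq h.2]

theorem card_disjointTuples_mul_le [DecidableEq ι] (m k : ℕ) (T : Finset ι) :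
    #(disjointTuples m k T) * m ^ (k * m) * (#T - k * m) ^ (#T - k * m) ≤ #T ^ #T := by
  induction k generalizing T with
  | zero =>
    have : #(disjointTuples m 0 T) ≤ 1 := card_le_one_of_subsingleton _
    simpa using Nat.mul_le_mul_right (#T ^ #T) this
  | succ k ih =>
    have hsucc : ∀ A ∈ T.powersetCard m, #(T \ A) - k * m = #T - (k + 1) * m := by
      intro A hA
      rw [mem_powersetCard] at hA
      rw [card_sdiff_of_subset hA.1, hA.2, Nat.sub_sub, add_mul, one_mul, add_comm]
    calc #(disjointTuples m (k + 1) T) * m ^ ((k + 1) * m) *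
            (#T - (k + 1) * m) ^ (#T - (k + 1) * m)
        = #(disjointTuples m (k + 1) T) * m ^ (k * m) *
            (#T - (k + 1) * m) ^ (#T - (k + 1) * m) * m ^ m := by
          rw [add_mul, one_mul, pow_add]; ring
      _ ≤ (∑ A ∈ T.powersetCard m, #(disjointTuples m k (T \ A))) * m ^ (k * m) *
            (#T - (k + 1) * m) ^ (#T - (k + 1) * m) * m ^ m := by
          gcongr; exact card_disjointTuples_succ_le
      _ = ∑ A ∈ T.powersetCard m, #(disjointTuples m k (T \ A)) * m ^ (k * m) *
            (#(T \ A) - k * m) ^ (#(T \ A) - k * m) * m ^ m := by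
          rw [sum_mul, sum_mul, sum_mul]
          exact sum_congr rfl fun A hA => by rw [hsucc A hA]
      _ ≤ ∑ A ∈ T.powersetCard m, (#T - m) ^ (#T - m) * m ^ m := by
          refine sum_le_sum fun A hA => Nat.mul_le_mul_right _ ?_
          rw [mem_powersetCard] at hA
          simpa [card_sdiff_of_subset hA.1, hA.2] using ih (T \ A)
      _ = (#T).choose m * m ^ m * (#T - m) ^ (#T - m) := by
          rw [sum_const, card_powersetCard, smul_eq_mul]; ring
      _ ≤ #T ^ #T := Nat.choose_mul_pow_mul_pow_le _ _

end DisjointTuples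

theorem List.forall_eq_of_filterMap_eq {α β : Type*} {f g : α → Option β} {l : List α}
    (hf : ∀ x ∈ l, (f x).isSome) (hg : ∀ x ∈ l, (g x).isSome)
    (h : l.filterMap f = l.filterMap g) : ∀ x ∈ l, f x = g x := by
  induction l with
  | nil => simp
  | cons a l ih =>
    obtain ⟨b, hb⟩ := Option.isSome_iff_exists.mp (hf a mem_cons_self)
    obtain ⟨c, hc⟩ := Option.isSome_iff_exists.mp (hg a mem_cons_self)
    simp only [filterMap_cons, hb, hc, cons.injEq] at h
    simp only [mem_cons, forall_eq_or_imp, hb, hc, h.1, true_and]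
    exact ih (fun x hx => hf x (mem_cons_of_mem a hx)) (fun x hx => hg x (mem_cons_of_mem a hx))
      h.2

section Extract

variable {σ : Type*} {S T : List σ} {I : Finset ℕ}

theorem extract_congr (h : ∀ i ∈ I, S[i]? = T[i]?) : extract S I = extract T I :=
  List.filterMap_congr fun i hi => h i ((mem_sort _).mp hi)

theorem getElem?_eq_of_extract_eq (hS : I ⊆ range S.length) (hT : I ⊆ range T.length)
    (h : extract S I = extract T I) : ∀ i ∈ I, S[i]? = T[i]? := by
  have hsome : ∀ U : List σ, I ⊆ range U.length → ∀ i ∈ I.sort (· ≤ ·), (U[i]?).isSome :=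
    fun U hU i hi => by simpa using mem_range.mp (hU ((mem_sort _).mp hi))
  exact fun i hi => List.forall_eq_of_filterMap_eq (hsome S hS) (hsome T hT) h i
    ((mem_sort _).mpr hi)

theorem eq_of_extract_eq_of_getElem?_eq {k : ℕ} {I : Fin k → Finset ℕ}
    (hS : ∀ j, I j ⊆ range S.length) (hT : ∀ j, I j ⊆ range T.length)
    (hdisj : Pairwise (Disjoint on I))
    (hSI : ∀ j j', extract S (I j) = extract S (I j'))
    (hTI : ∀ j j', extract T (I j) = extract T (I j')) (j₀ : Fin k)
    (hout : ∀ i, (∀ j ≠ j₀, i ∉ I j) → S[i]? = T[i]?) : S = T := by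
  refine List.ext_getElem? fun i => ?_
  by_cases hi : ∃ j ≠ j₀, i ∈ I j
  · obtain ⟨j, -, hij⟩ := hi
    refine getElem?_eq_of_extract_eq (hS j) (hT j) ?_ i hij
    calc extract S (I j) = extract S (I j₀) := hSI j j₀
      _ = extract T (I j₀) := extract_congr fun i' hi' => hout i' fun j' hj' hij' =>
          disjoint_left.mp (hdisj hj') hij' hi'
      _ = extract T (I j) := hTI j₀ j
  · exact hout i fun j hj hij => hi ⟨j, hj, hij⟩

end Extract

section Counting

open scoped Classical

variable {σ : Type*} [Fintype σ] {n k m : ℕ}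

theorem card_extract_eq_le (hk : 0 < k) {I : Fin k → Finset ℕ}
    (hI : I ∈ disjointTuples m k (range n)) :
    #{f : Fin n → σ | ∀ j j', extract (List.ofFn f) (I j) = extract (List.ofFn f) (I j')} ≤
      Fintype.card σ ^ (n - (k - 1) * m) := by
  obtain ⟨hsub, hdisj⟩ := mem_disjointTuples.mp hI
  set j₀ : Fin k := ⟨0, hk⟩
  set U := (univ.erase j₀).biUnion I
  have hU : U ⊆ range n := biUnion_subset.mpr fun j _ => (hsub j).1
  have hcardU : #U = (k - 1) * m := by
    rw [card_biUnion fun j _ j' _ h => hdisj h, sum_congr rfl fun j _ => (hsub j).2, sum_const,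
      card_erase_of_mem (mem_univ _), card_univ, Fintype.card_fin, smul_eq_mul]
  calc _ ≤ #(univ : Finset (↥(range n \ U) → σ)) := by
        refine card_le_card_of_injOn (fun f x => f ⟨x, mem_range.mp (mem_sdiff.mp x.2).1⟩)
          (fun _ _ => mem_coe.mpr (mem_univ _)) ?_
        intro f hf g hg hfg
        simp only [coe_filter, Set.mem_ofPred_eq, mem_univ, true_and] at hf hg
        have hlen : ∀ j, I j ⊆ range (List.ofFn f).length := by
          simpa using fun j => (hsub j).1
        refine List.ofFn_injective (eq_of_extract_eq_of_getElem?_eq hlen (by simpa using hlen)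
          hdisj hf hg j₀ fun i hi => ?_)
        simp only [List.getElem?_ofFn]
        split_ifs with hin
        · have hiU : i ∈ range n \ U :=
            mem_sdiff.mpr ⟨mem_range.mpr hin, by simpa [U] using hi⟩
          exact congrArg some (congrFun hfg ⟨i, hiU⟩)
        · rfl
    _ = Fintype.card σ ^ (n - (k - 1) * m) := by
        rw [card_univ, Fintype.card_fun, Fintype.card_coe, card_sdiff_of_subset hU, card_range,
          hcardU]

theorem card_hasKTuplets_le (hk : 0 < k) :
    #{f : Fin n → σ | HasKTuplets (List.ofFn f) k m} ≤
      #(disjointTuples m k (range n)) * Fintype.card σ ^ (n - (k - 1) * m) := by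
  calc _ ≤ #((disjointTuples m k (range n)).biUnion fun I => {f : Fin n → σ |
          ∀ j j', extract (List.ofFn f) (I j) = extract (List.ofFn f) (I j')}) := by
        refine card_le_card fun f hf => ?_
        obtain ⟨I, hsub, hdisj, hcard, hext⟩ := (mem_filter.mp hf).2
        rw [List.length_ofFn] at hsub
        exact mem_biUnion.mpr ⟨I, mem_disjointTuples.mpr ⟨fun j => ⟨hsub j, hcard j⟩, hdisj⟩,
          mem_filter.mpr ⟨mem_univ _, hext⟩⟩
    _ ≤ _ := card_biUnion_le_card_mul _ _ _ fun I hI => card_extract_eq_le hk hI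

theorem exists_not_hasKTuplets [Nonempty σ] (hk : 0 < k) (hkm : k * m ≤ n)
    (h : n ^ n < m ^ (k * m) * (n - k * m) ^ (n - k * m) * Fintype.card σ ^ ((k - 1) * m)) :
    ∃ S : List σ, S.length = n ∧ ¬ HasKTuplets S k m := by
  have hW : #(disjointTuples m k (range n)) < Fintype.card σ ^ ((k - 1) * m) := by
    have := card_disjointTuples_mul_le m k (range n)
    rw [card_range] at this
    have hpos : 0 < m ^ (k * m) * (n - k * m) ^ (n - k * m) :=
      Nat.pos_of_ne_zero fun h0 => by simp [h0] at h
    nlinarith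
  have hbad :
      #{f : Fin n → σ | HasKTuplets (List.ofFn f) k m} < #(univ : Finset (Fin n → σ)) :=
    calc _ ≤ #(disjointTuples m k (range n)) * Fintype.card σ ^ (n - (k - 1) * m) :=
          card_hasKTuplets_le hk
      _ < Fintype.card σ ^ ((k - 1) * m) * Fintype.card σ ^ (n - (k - 1) * m) := by
          gcongr
      _ = #(univ : Finset (Fin n → σ)) := by
          have : (k - 1) * m ≤ n := (Nat.mul_le_mul_right m (Nat.sub_le k 1)).trans hkm
          rw [← pow_add, Nat.add_sub_cancel' this, card_univ, Fintype.card_fun, Fintype.card_fin]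
  obtain ⟨f, -, hf⟩ := exists_mem_notMem_of_card_lt_card hbad
  exact ⟨List.ofFn f, List.length_ofFn, by simpa using hf⟩

end Counting

section Rate

noncomputable def tupletRate (ℓ k : ℕ) (β : ℝ) : ℝ :=
  (ℓ : ℝ) ^ (-((k : ℝ) - 1) * β) * β ^ (-(k : ℝ) * β) * (1 - (k : ℝ) * β) ^ ((k : ℝ) * β - 1)

variable {ℓ k m n : ℕ}

theorem tupletRate_pow_mul_eq (hℓ : 0 < ℓ) (hk : 0 < k) (hkm : k * m < n) :
    tupletRate ℓ k (m / n) ^ n *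
      (m ^ (k * m) * (n - k * m) ^ (n - k * m) * ℓ ^ ((k - 1) * m) : ℕ) = (n : ℝ) ^ n := by
  have hn : (n : ℝ) ≠ 0 := by exact_mod_cast (Nat.zero_le _).trans_lt hkm |>.ne'
  have hβ : 0 ≤ (m : ℝ) / n := by positivity
  have hrest : 1 - (k : ℝ) * (m / n) = ((n - k * m : ℕ) : ℝ) / n := by
    push_cast [hkm.le]; field_simp
  have h1 : ((ℓ : ℝ) ^ (-((k : ℝ) - 1) * (m / n))) ^ n = ((ℓ : ℝ) ^ ((k - 1) * m))⁻¹ := by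
    rw [← Real.rpow_mul_natCast (by positivity), ← Real.rpow_natCast,
      ← Real.rpow_neg (by positivity)]
    push_cast [Nat.cast_sub hk]
    field_simp
  have h2 : (((m : ℝ) / n) ^ (-(k : ℝ) * (m / n))) ^ n = (((m : ℝ) / n) ^ (k * m))⁻¹ := by
    rw [← Real.rpow_mul_natCast hβ, ← Real.rpow_natCast, ← Real.rpow_neg hβ]
    push_cast
    field_simp
  have h3 : ((1 - (k : ℝ) * (m / n)) ^ ((k : ℝ) * (m / n) - 1)) ^ n =
      ((1 - (k : ℝ) * (m / n)) ^ (n - k * m))⁻¹ := by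
    rw [← Real.rpow_mul_natCast (hrest ▸ by positivity), ← Real.rpow_natCast,
      ← Real.rpow_neg (hrest ▸ by positivity)]
    push_cast [hkm.le]
    congr 1
    field_simp
    ring
  have hmpow : (m : ℝ) ^ (k * m) ≠ 0 := by
    rcases eq_or_ne m 0 with rfl | hm
    · simp
    · positivity
  have hrestpow : ((n - k * m : ℕ) : ℝ) ^ (n - k * m) ≠ 0 :=
    pow_ne_zero _ (by exact_mod_cast (Nat.sub_pos_of_lt hkm).ne')
  rw [tupletRate, mul_pow, mul_pow, h1, h2, h3, hrest, div_pow, div_pow]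
  push_cast
  field_simp
  rw [← pow_add, Nat.add_sub_cancel' hkm.le]

theorem pow_lt_of_tupletRate_lt (hℓ : 0 < ℓ) (hk : 0 < k) (hkm : k * m < n)
    (h : tupletRate ℓ k (m / n) < 1) :
    n ^ n < m ^ (k * m) * (n - k * m) ^ (n - k * m) * ℓ ^ ((k - 1) * m) := by
  set P := m ^ (k * m) * (n - k * m) ^ (n - k * m) * ℓ ^ ((k - 1) * m)
  have hn : 0 < n := (Nat.zero_le _).trans_lt hkm
  have heq : tupletRate ℓ k (m / n) ^ n * P = (n : ℝ) ^ n := tupletRate_pow_mul_eq hℓ hk hkm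
  have hrate : 0 ≤ tupletRate ℓ k (m / n) := by
    have : 0 ≤ 1 - (k : ℝ) * (m / n) := by
      rw [mul_div_assoc', sub_nonneg, div_le_one (by positivity)]; exact_mod_cast hkm.le
    unfold tupletRate
    positivity
  have hP : (0 : ℝ) < P := pos_of_mul_pos_right (heq ▸ by positivity) (pow_nonneg hrate n)
  have : (n : ℝ) ^ n < P := heq ▸ mul_lt_of_lt_one_left hP (pow_lt_one₀ hrate h hn.ne')
  exact_mod_cast this

theorem continuousAt_tupletRate (hℓ : 0 < ℓ) {α : ℝ} (hα : 0 < α) (hkα : k * α < 1) :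
    ContinuousAt (tupletRate ℓ k) α := by
  have hℓR : (ℓ : ℝ) ≠ 0 := by positivity
  have hrest : 1 - (k : ℝ) * α ≠ 0 := by linarith
  exact ((continuousAt_const.rpow (by fun_prop) (.inl hℓR)).mul
    (continuousAt_id.rpow (by fun_prop) (.inl hα.ne'))).mul
    ((continuousAt_const.sub (continuousAt_const.mul continuousAt_id)).rpow (by fun_prop)
      (.inl hrest))

end Rate

open Filter Topology in
theorem no_large_ktuplets_general (ℓ k : ℕ) (hℓ : k < ℓ)
    (α : ℝ) (h0 : 0 < α) (h1 : α < 1 / (k : ℝ))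
    (hmain : (ℓ : ℝ) ^ (-((k : ℝ) - 1) * α) * α ^ (-(k : ℝ) * α) *
      (1 - (k : ℝ) * α) ^ ((k : ℝ) * α - 1) < 1) :
    ∃ N : ℕ, ∀ n : ℕ, N ≤ n →
      ∃ S : List (Fin ℓ), S.length = n ∧ ¬ HasKTuplets S k ⌈α * (n : ℝ)⌉₊ := by
  have hk : 0 < k := Nat.pos_of_ne_zero fun hk => by simp [hk] at h1; linarith
  have hℓpos : 0 < ℓ := hk.trans hℓ
  have hkα : (k : ℝ) * α < 1 := by rwa [lt_div_iff₀' (by positivity)] at h1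
  have hβ : Tendsto (fun n : ℕ => (⌈α * n⌉₊ : ℝ) / n) atTop (𝓝 α) :=
    (tendsto_nat_ceil_mul_div_atTop h0.le).comp tendsto_natCast_atTop_atTop
  have hrate : ∀ᶠ n : ℕ in atTop, tupletRate ℓ k (⌈α * n⌉₊ / n) < 1 :=
    (continuousAt_tupletRate hℓpos h0 hkα).tendsto.comp hβ |>.eventually (gt_mem_nhds hmain)
  have hlen : ∀ᶠ n : ℕ in atTop, k * ⌈α * n⌉₊ < n := by
    filter_upwards [(hβ.const_mul (k : ℝ)).eventually (gt_mem_nhds hkα), eventually_gt_atTop 0]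
      with n hn hpos
    rw [mul_div_assoc', div_lt_one (by positivity)] at hn
    exact_mod_cast hn
  obtain ⟨N, hN⟩ := eventually_atTop.mp (hrate.and hlen)
  refine ⟨N, fun n hn => ?_⟩
  obtain ⟨hr, hkm⟩ := hN n hn
  have : Nonempty (Fin ℓ) := ⟨⟨0, hℓpos⟩⟩
  exact exists_not_hasKTuplets hk hkm.le (by simpa using pow_lt_of_tupletRate_lt hℓpos hk hkm hr)

/-- Probabilistic upper bound on `k`-tuplets: if `ℓ = |Σ| > k ≥ 2` and
`α ∈ (0, 1/k)` satisfies `ℓ^{-(k-1)α} · α^{-kα} · (1-kα)^{kα-1} < 1`, then for all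
sufficiently large `n` there is a word of length `n` over `Σ` without `k` pairwise
disjoint identical scattered subwords of length `⌈αn⌉` each. -/
theorem no_large_ktuplets (ℓ k : ℕ) (hk : 2 ≤ k) (hℓ : k < ℓ)
    (α : ℝ) (h0 : 0 < α) (h1 : α < 1 / (k : ℝ))
    (hmain : (ℓ : ℝ) ^ (-((k : ℝ) - 1) * α) * α ^ (-(k : ℝ) * α) *
      (1 - (k : ℝ) * α) ^ ((k : ℝ) * α - 1) < 1) :
    ∃ N : ℕ, ∀ n : ℕ, N ≤ n →
      ∃ S : List (Fin ℓ), S.length = n ∧ ¬ HasKTuplets S k ⌈α * (n : ℝ)⌉₊ :=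
  no_large_ktuplets_general ℓ k hℓ α h0 h1 hmain
end

section
/- f(8, 2, {0,1,2}) = 2: every word of length 8 over a 3-letter alphabet contains two disjoint identical scattered subwords of length 2, while some word of length 7 over a 3-letter alphabet has no two disjoint identical scattered subwords of length 2. -/
/-! A word of length eight over three letters either repeats some letter four times, giving
the twins `a a`, or repeats two letters `x ≠ y` three times each; interleaving the two triples
shows that `x y` or `y x` can be read at two disjoint pairs of positions. Counting occurrences,
the same happens for every word of length at least `2 * |α| + 2`. For the lower bound, an
exhaustive search shows that `0122210` has no twins of length two. -/

theorem Finset.exists_lt_eq_pair_of_card_eq_two {β : Type*} [LinearOrder β] {s : Finset β}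
    (h : s.card = 2) : ∃ a b, a < b ∧ s = {a, b} := by
  obtain ⟨x, y, hxy, rfl⟩ := Finset.card_eq_two.mp h
  rcases hxy.lt_or_gt with hlt | hgt
  · exact ⟨x, y, hlt, rfl⟩
  · exact ⟨y, x, hgt, Finset.pair_comm x y⟩

theorem extract_pair {α : Type*} (S : List α) {i j : ℕ} (hij : i < j) (hj : j < S.length) :
    extract S {i, j} = [S[i], S[j]] := by
  have hsort : ({i, j} : Finset ℕ).sort (· ≤ ·) = [i, j] := by
    rw [Finset.sort_insert _ (by simpa using hij.le) (by simpa using hij.ne),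
      Finset.sort_singleton]
  simp [extract, hsort, List.getElem?_eq_getElem (hij.trans hj), List.getElem?_eq_getElem hj]

def HasTwinPairs {α : Type*} (S : List α) : Prop :=
  ∃ i₁ j₁ i₂ j₂ : Fin S.length, i₁ < j₁ ∧ i₂ < j₂ ∧
    i₁ ≠ i₂ ∧ i₁ ≠ j₂ ∧ j₁ ≠ i₂ ∧ j₁ ≠ j₂ ∧ S[i₁] = S[i₂] ∧ S[j₁] = S[j₂]

instance {α : Type*} [DecidableEq α] (S : List α) : Decidable (HasTwinPairs S) := by
  unfold HasTwinPairs; infer_instance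

theorem hasTwins_two_iff {α : Type*} {S : List α} : HasTwins S 2 ↔ HasTwinPairs S := by
  constructor
  · rintro ⟨I, J, hI, hJ, hIJ, hIcard, hJcard, hext⟩
    obtain ⟨a, b, hab, rfl⟩ := Finset.exists_lt_eq_pair_of_card_eq_two hIcard
    obtain ⟨c, d, hcd, rfl⟩ := Finset.exists_lt_eq_pair_of_card_eq_two hJcard
    simp only [Finset.insert_subset_iff, Finset.singleton_subset_iff, Finset.mem_range] at hI hJ
    rw [extract_pair S hab hI.2, extract_pair S hcd hJ.2, List.cons.injEq, List.cons.injEq] at hext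
    simp only [Finset.disjoint_insert_left, Finset.disjoint_insert_right, Finset.mem_insert,
      Finset.mem_singleton, Finset.disjoint_singleton, not_or] at hIJ
    refine ⟨⟨a, hI.1⟩, ⟨b, hI.2⟩, ⟨c, hJ.1⟩, ⟨d, hJ.2⟩, hab, hcd, ?_, ?_, ?_, ?_,
      hext.1, hext.2.1⟩ <;> simp only [ne_eq, Fin.mk.injEq] <;> omega
  · rintro ⟨i₁, j₁, i₂, j₂, h₁, h₂, hii, hij, hji, hjj, hi, hj⟩
    refine ⟨{i₁.val, j₁.val}, {i₂.val, j₂.val}, ?_, ?_, ?_, ?_, ?_, ?_⟩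
    · simp [Finset.insert_subset_iff]
    · simp [Finset.insert_subset_iff]
    · simp only [ne_eq, Fin.ext_iff] at hii hij hji hjj
      simp only [Finset.disjoint_insert_left, Finset.disjoint_insert_right, Finset.mem_insert,
        Finset.mem_singleton, Finset.disjoint_singleton]
      omega
    · exact Finset.card_pair (Fin.val_ne_of_ne h₁.ne)
    · exact Finset.card_pair (Fin.val_ne_of_ne h₂.ne)
    · rw [extract_pair S h₁ j₁.isLt, extract_pair S h₂ j₂.isLt]
      exact congrArg₂ (· :: [·]) hi hj

section Occurrences

variable {α : Type*} {S : List α}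

theorem hasTwinPairs_of_four_eq {x : α} {p : Fin 4 → Fin S.length} (hp : StrictMono p)
    (hx : ∀ k, S[p k] = x) : HasTwinPairs S :=
  ⟨p 0, p 1, p 2, p 3, hp (by decide), hp (by decide), hp.injective.ne (by decide),
    hp.injective.ne (by decide), hp.injective.ne (by decide), hp.injective.ne (by decide),
    by rw [hx, hx], by rw [hx, hx]⟩

theorem hasTwinPairs_of_three_eq_three {x y : α} (hxy : x ≠ y) {p q : Fin 3 → Fin S.length}
    (hp : StrictMono p) (hq : StrictMono q) (hpx : ∀ k, S[p k] = x) (hqy : ∀ k, S[q k] = y) :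
    HasTwinPairs S := by
  have hpq : ∀ k l, p k ≠ q l := fun k l h => hxy (by simp only [← hpx k, ← hqy l, h])
  have hp01 := hp (show (0 : Fin 3) < 1 by decide)
  have hp12 := hp (show (1 : Fin 3) < 2 by decide)
  have hq01 := hq (show (0 : Fin 3) < 1 by decide)
  have hq12 := hq (show (1 : Fin 3) < 2 by decide)
  -- if `x y` is not read at `(p 0, q 1)` and `(p 1, q 2)`, some `y` comes early enough
  -- for `y x` to be read at `(q 0, p 1)` and `(q 1, p 2)`
  by_cases hxy_pairs : p 0 < q 1 ∧ p 1 < q 2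
  · exact ⟨p 0, q 1, p 1, q 2, hxy_pairs.1, hxy_pairs.2, hp01.ne, hpq 0 2, (hpq 1 1).symm,
      hq12.ne, by rw [hpx, hpx], by rw [hqy, hqy]⟩
  · have hyx_pairs : q 0 < p 1 ∧ q 1 < p 2 := by
      have := hpq 0 1
      have := hpq 1 2
      omega
    exact ⟨q 0, p 1, q 1, p 2, hyx_pairs.1, hyx_pairs.2, hq01.ne, (hpq 2 0).symm, hpq 1 1,
      hp12.ne, by rw [hqy, hqy], by rw [hpx, hpx]⟩

variable [DecidableEq α]

def occurrences (S : List α) (x : α) : Finset (Fin S.length) := {i | S[i] = x}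

theorem sum_card_occurrences [Fintype α] (S : List α) :
    ∑ x, (occurrences S x).card = S.length := by
  unfold occurrences
  rw [← Finset.card_eq_sum_card_fiberwise (fun i _ => Finset.mem_univ (S[i])),
    Finset.card_univ, Fintype.card_fin]

theorem exists_strictMono_of_le_card_occurrences {x : α} {k : ℕ}
    (h : k ≤ (occurrences S x).card) :
    ∃ p : Fin k → Fin S.length, StrictMono p ∧ ∀ i, S[p i] = x :=
  ⟨_, (Finset.orderEmbOfCardLe _ h).strictMono,
    fun i => (Finset.mem_filter.mp (Finset.orderEmbOfCardLe_mem _ h i)).2⟩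

theorem hasTwinPairs_of_two_mul_card_add_two_le_length [Fintype α]
    (hS : 2 * Fintype.card α + 2 ≤ S.length) : HasTwinPairs S := by
  by_contra hno
  have hα : (Finset.univ : Finset α).Nonempty := ⟨S[0], Finset.mem_univ _⟩
  obtain ⟨x₀, -, hmax⟩ :=
    Finset.exists_max_image Finset.univ (fun x => (occurrences S x).card) hα
  have hle : ∀ x, (occurrences S x).card ≤ 2 + if x = x₀ then 1 else 0 := by
    intro x
    split_ifs with hx
    · by_contra! h4
      obtain ⟨p, hp, hpx⟩ := exists_strictMono_of_le_card_occurrences (k := 4) h4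
      exact hno (hasTwinPairs_of_four_eq hp hpx)
    · by_contra! h3
      obtain ⟨p, hp, hpx⟩ := exists_strictMono_of_le_card_occurrences (k := 3) h3
      obtain ⟨q, hq, hqx₀⟩ := exists_strictMono_of_le_card_occurrences
        (h3.trans_le (hmax x (Finset.mem_univ x)))
      exact hno (hasTwinPairs_of_three_eq_three hx hp hq hpx hqx₀)
  have hsum := Finset.sum_le_sum fun x (_ : x ∈ Finset.univ) => hle x
  rw [sum_card_occurrences, Finset.sum_add_distrib, Finset.sum_ite_eq'] at hsum
  simp only [Finset.sum_const, Finset.card_univ, smul_eq_mul, Finset.mem_univ, if_true] at hsum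
  omega

end Occurrences

/-- `f(8, 2, {0,1,2}) = 2`: every ternary word of length 8 has two disjoint identical
scattered subwords of length 2, while some ternary word of length 7 has no two
disjoint identical scattered subwords of length 2. -/
theorem f_eight_two_three :
    (∀ S : List (Fin 3), S.length = 8 → HasTwins S 2) ∧
    (∃ S : List (Fin 3), S.length = 7 ∧ ¬ HasTwins S 2) := by
  refine ⟨fun S hS => hasTwins_two_iff.mpr ?_, [0, 1, 2, 2, 2, 1, 0], rfl, ?_⟩
  · exact hasTwinPairs_of_two_mul_card_add_two_le_length (by simp [hS])
  · rw [hasTwins_two_iff]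
    decide
end

section
/- If a word S over alphabet Σ admits a partition into consecutive factors S_1,...,S_t, and for each i the factor S_i contains k pairwise disjoint identical subwords of total length at least (1−δ)|S_i| whenever S_i is ε-regular, and the total length of non-ε-regular factors is at most εn, then S contains k pairwise disjoint identical subwords of total length at least (1−δ−ε)n. -/
/-!
The `k` index sets of a tuplet in a factor `A` and those of a tuplet in the following factor `B`,
shifted by `|A|`, concatenate to a tuplet of `A ++ B`: every index of the first part lies to the
left of every index of the second, so the extracted subwords concatenate as well. Taking the
given tuplets in the `ε`-regular factors and empty ones elsewhere, the deficit is at most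
`(1 - δ)` times the total irregular length, hence at most `ε n` once `δ ≥ 0`.
-/

open scoped Classical

theorem Finset.sort_union_of_forall_lt {β : Type*} [LinearOrder β] {s t : Finset β}
    (h : ∀ a ∈ s, ∀ b ∈ t, a < b) : (s ∪ t).sort = s.sort ++ t.sort := by
  have hl : (s.sort ++ t.sort).Pairwise (· < ·) := by
    rw [List.pairwise_append]
    exact ⟨s.sortedLT_sort.pairwise, t.sortedLT_sort.pairwise,
      fun a ha b hb => h a (by simpa using ha) b (by simpa using hb)⟩
  have := (List.toFinset_sort (· ≤ ·) hl.nodup).2 (hl.imp le_of_lt)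
  rwa [List.toFinset_append, Finset.sort_toFinset, Finset.sort_toFinset] at this

theorem Finset.sort_map_addLeftEmbedding (n : ℕ) (s : Finset ℕ) :
    (s.map (addLeftEmbedding n)).sort = s.sort.map (n + ·) := by
  rw [← StrictMonoOn.map_finsetSort]
  · rfl
  · intro a _ b _ hab
    simpa using hab

section Gluing

open Finset

variable {α : Type*}

theorem extract_append_union_map (A B : List α) {I : Finset ℕ} (hI : I ⊆ range A.length)
    (J : Finset ℕ) :
    extract (A ++ B) (I ∪ J.map (addLeftEmbedding A.length)) = extract A I ++ extract B J := by
  have hlt : ∀ a ∈ I, ∀ b ∈ J.map (addLeftEmbedding A.length), a < b := by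
    intro a ha b hb
    obtain ⟨c, -, rfl⟩ := mem_map.1 hb
    have := mem_range.1 (hI ha)
    simp only [addLeftEmbedding_apply]
    omega
  unfold extract
  rw [sort_union_of_forall_lt hlt, sort_map_addLeftEmbedding, List.filterMap_append,
    List.filterMap_map]
  congr 1
  · refine List.filterMap_congr fun i hi => ?_
    exact List.getElem?_append_left (mem_range.1 (hI ((mem_sort _).1 hi)))
  · refine List.filterMap_congr fun i _ => ?_
    change (A ++ B)[A.length + i]? = B[i]?
    rw [List.getElem?_append_right (Nat.le_add_right _ _), Nat.add_sub_cancel_left]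

theorem hasKTuplets_zero (S : List α) (k : ℕ) : HasKTuplets S k 0 :=
  ⟨fun _ => ∅, fun _ => empty_subset _, fun _ _ _ => disjoint_empty_left _,
    fun _ => card_empty, fun _ _ => rfl⟩

theorem HasKTuplets.append {A B : List α} {k ℓ₁ ℓ₂ : ℕ} (h₁ : HasKTuplets A k ℓ₁)
    (h₂ : HasKTuplets B k ℓ₂) : HasKTuplets (A ++ B) k (ℓ₁ + ℓ₂) := by
  obtain ⟨I, hIA, hIdisj, hIcard, hIeq⟩ := h₁
  obtain ⟨J, hJB, hJdisj, hJcard, hJeq⟩ := h₂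
  have hsep : ∀ j j', Disjoint (I j) ((J j').map (addLeftEmbedding A.length)) := fun j j' =>
    (disjoint_range_addLeftEmbedding _ _).mono_left (hIA j)
  refine ⟨fun j => I j ∪ (J j).map (addLeftEmbedding A.length), fun j => ?_,
    fun j j' hjj' => ?_, fun j => ?_, fun j j' => ?_⟩
  · rw [List.length_append, range_add]
    exact union_subset_union (hIA j) (map_subset_map.2 (hJB j))
  · rw [disjoint_union_left, disjoint_union_right, disjoint_union_right, disjoint_map]
    exact ⟨⟨hIdisj j j' hjj', hsep j j'⟩, (hsep j' j).symm, hJdisj j j' hjj'⟩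
  · rw [card_union_of_disjoint (hsep j j), card_map, hIcard, hJcard]
  · rw [extract_append_union_map _ _ (hIA j), extract_append_union_map _ _ (hIA j'), hIeq,
      hJeq]

theorem exists_hasKTuplets_flatten {k : ℕ} (P : List (List α)) (w : List α → ℝ)
    (h : ∀ T ∈ P, ∃ ℓ, HasKTuplets T k ℓ ∧ w T ≤ k * ℓ) :
    ∃ ℓ, HasKTuplets P.flatten k ℓ ∧ (P.map w).sum ≤ k * ℓ := by
  induction P with
  | nil => exact ⟨0, hasKTuplets_zero _ _, by simp⟩
  | cons T P ih =>
    obtain ⟨ℓ₁, hT, hwT⟩ := h T List.mem_cons_self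
    obtain ⟨ℓ₂, hP, hwP⟩ := ih fun T' hT' => h T' (List.mem_cons_of_mem _ hT')
    refine ⟨ℓ₁ + ℓ₂, hT.append hP, ?_⟩
    rw [List.map_cons, List.sum_cons, Nat.cast_add, mul_add]
    exact add_le_add hwT hwP

end Gluing

theorem glue_ktuplets_general {α : Type*} [DecidableEq α]
    (k : ℕ) (ε δ : ℝ) (hδ : 0 ≤ δ)
    (S : List α) (P : List (List α)) (hP : P.flatten = S)
    (hirr : (P.map (fun T =>
        if EpsRegular T ε ⌈ε * (T.length : ℝ)⌉₊ then (0 : ℝ)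
        else (T.length : ℝ))).sum ≤ ε * (S.length : ℝ))
    (hreg : ∀ T ∈ P, EpsRegular T ε ⌈ε * (T.length : ℝ)⌉₊ →
      ∃ L : ℕ, HasKTuplets T k L ∧ (1 - δ) * (T.length : ℝ) ≤ (k : ℝ) * L) :
    ∃ L : ℕ, HasKTuplets S k L ∧
      (1 - δ - ε) * (S.length : ℝ) ≤ (k : ℝ) * L := by
  subst hP
  set regular : List α → Prop := fun T => EpsRegular T ε ⌈ε * (T.length : ℝ)⌉₊
  set irr : List α → ℝ := fun T => if regular T then 0 else (T.length : ℝ)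
  set w : List α → ℝ := fun T => if regular T then (1 - δ) * T.length else 0
  obtain ⟨L, hL, hw⟩ := exists_hasKTuplets_flatten P w fun T hT => by
    by_cases hT' : regular T
    · simpa only [w, if_pos hT'] using hreg T hT hT'
    · exact ⟨0, hasKTuplets_zero T k, by simp [w, hT']⟩
  have hlen : (P.flatten.length : ℝ) = (P.map fun T => (T.length : ℝ)).sum := by
    rw [List.length_flatten, Nat.cast_list_sum, List.map_map]
    rfl
  have hdeficit : (P.map fun T => (1 - δ) * T.length).sum ≤ (P.map fun T => w T + irr T).sum :=
    List.sum_le_sum fun T _ => by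
      by_cases hT : regular T <;> simp only [irr, w, hT, if_true, if_false] <;> nlinarith
  rw [List.sum_map_add, List.sum_map_mul_left, ← hlen] at hdeficit
  exact ⟨L, hL, by linarith⟩

/-- Gluing step: if a word `S` of length `n` is partitioned into consecutive factors,
the non-`ε`-regular factors have total length at most `ε·n`, and every `ε`-regular
factor `T` contains `k` pairwise disjoint identical subwords of total length at least
`(1-δ)|T|`, then `S` contains `k` pairwise disjoint identical subwords of total
length at least `(1-δ-ε)·n`. -/
theorem glue_ktuplets {α : Type*} [Fintype α] [DecidableEq α]
    (k : ℕ) (ε δ : ℝ) (hε : 0 ≤ ε) (hδ : 0 ≤ δ)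
    (S : List α) (P : List (List α)) (hP : P.flatten = S)
    (hirr : (P.map (fun T =>
        if EpsRegular T ε ⌈ε * (T.length : ℝ)⌉₊ then (0 : ℝ)
        else (T.length : ℝ))).sum ≤ ε * (S.length : ℝ))
    (hreg : ∀ T ∈ P, EpsRegular T ε ⌈ε * (T.length : ℝ)⌉₊ →
      ∃ L : ℕ, HasKTuplets T k L ∧ (1 - δ) * (T.length : ℝ) ≤ (k : ℝ) * L) :
    ∃ L : ℕ, HasKTuplets S k L ∧
      (1 - δ - ε) * (S.length : ℝ) ≤ (k : ℝ) * L :=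
  glue_ktuplets_general k ε δ hδ S P hP hirr hreg
end
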